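/- arXiv:1208.4084 — 5 statements merged into one kernel-verified Lean document; each statement's English description precedes it below -/
import Mathlib

section
/- Let j and k be positive integers with j < k, and let c, x be real numbers with c · x^j > 0. Then the value of the infinite product over n = 1, 2, 3, … of exp(c · ((r^k − 1)^{1/k} · x / r^n)^j), regarded as a function of r, tends to +∞ as r tends to 1 from the right. -/
open Filter Topology

-- closed form of the product for r > 1
lemma tprod_eq_aux (j k : ℕ) (hj : 0 < j) (hk : 0 < k) (c x : ℝ) {r : ℝ} (hr : 1 < r) :
    (∏' n : ℕ, Real.exp (c * ((r ^ k - 1) ^ ((1 : ℝ) / k) * x / r ^ (n + 1)) ^ j))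
      = Real.exp (c * x ^ j * (r ^ k - 1) ^ ((j : ℝ) / k) / (r ^ j - 1)) := by
  have hr0 : (0:ℝ) < r := lt_trans one_pos hr
  have hrk : 1 < r ^ k := one_lt_pow₀ hr hk.ne'
  have hrj : 1 < r ^ j := one_lt_pow₀ hr hj.ne'
  set a : ℝ := (r ^ k - 1) ^ ((1 : ℝ) / k) with ha
  set q : ℝ := (r ^ j)⁻¹ with hq
  have hq0 : 0 ≤ q := by positivity
  have hq1 : q < 1 := inv_lt_one_of_one_lt₀ hrj
  have hterm : ∀ n : ℕ, c * (a * x / r ^ (n + 1)) ^ j = (c * (a * x) ^ j * q) * q ^ n := by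
    intro n
    have : (a * x / r ^ (n + 1)) ^ j = (a * x) ^ j * q ^ (n + 1) := by
      rw [div_pow, hq, ← pow_mul, inv_pow, ← pow_mul, Nat.mul_comm]
      ring
    rw [this, pow_succ]
    ring
  have hsum : HasSum (fun n : ℕ => c * (a * x / r ^ (n + 1)) ^ j)
      ((c * (a * x) ^ j * q) * (1 - q)⁻¹) := by
    simpa only [← hterm] using (hasSum_geometric_of_lt_one hq0 hq1).mul_left (c * (a * x) ^ j * q)
  have hprod := hsum.rexp
  have heq : (c * (a * x) ^ j * q) * (1 - q)⁻¹
      = c * x ^ j * (r ^ k - 1) ^ ((j : ℝ) / k) / (r ^ j - 1) := by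
    have haj : a ^ j = (r ^ k - 1) ^ ((j : ℝ) / k) := by
      rw [ha, ← Real.rpow_natCast ((r ^ k - 1) ^ ((1:ℝ)/k)) j,
        ← Real.rpow_mul (by linarith : (0:ℝ) ≤ r ^ k - 1)]
      congr 1; field_simp
    rw [mul_pow, haj, hq]
    have h1 : r ^ j ≠ 0 := by positivity
    have h2 : r ^ j - 1 ≠ 0 := by linarith
    field_simp
  rw [← heq]
  exact hprod.tprod_eq

/-- For positive integers `j < k` and reals `c, x` with `c * x^j > 0`, the value of the infinite
product over `n = 1, 2, 3, …` of `exp (c * ((r^k − 1)^(1/k) * x / r^n)^j)`, as a function of `r`,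
tends to `+∞` as `r → 1⁺`. -/
theorem tendsto_multiproduct_atTop_of_lt_pos
    (j k : ℕ) (hj : 0 < j) (hk : 0 < k) (hjk : j < k) (c x : ℝ) (hcx : 0 < c * x ^ j) :
    Tendsto
      (fun r : ℝ =>
        ∏' n : ℕ, Real.exp (c * ((r ^ k - 1) ^ ((1 : ℝ) / k) * x / r ^ (n + 1)) ^ j))
      (𝓝[>] (1 : ℝ)) atTop := by
  have hk0 : (0:ℝ) < k := by exact_mod_cast hk
  have hjk' : (j:ℝ) < k := by exact_mod_cast hjk
  have hexp : (0:ℝ) < 1 - (j:ℝ) / k := by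
    rw [sub_pos, div_lt_one hk0]; exact hjk'
  -- r^k - 1 tends to 0 within (0,∞)
  have h1 : Tendsto (fun r : ℝ => r ^ k - 1) (𝓝[>] (1:ℝ)) (𝓝[>] (0:ℝ)) := by
    rw [tendsto_nhdsWithin_iff]
    constructor
    · have : Tendsto (fun r : ℝ => r ^ k - 1) (𝓝 (1:ℝ)) (𝓝 ((1:ℝ) ^ k - 1)) :=
        ((continuous_pow k).sub continuous_const).tendsto 1
      simpa using this.mono_left nhdsWithin_le_nhds
    · filter_upwards [self_mem_nhdsWithin] with r (hr : 1 < r)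
      exact sub_pos.mpr (one_lt_pow₀ hr hk.ne')
  -- t ^ (j/k - 1) tends to atTop as t → 0+
  have h2 : Tendsto (fun t : ℝ => t ^ ((j:ℝ) / k - 1)) (𝓝[>] (0:ℝ)) atTop := by
    have h3 : Tendsto (fun t : ℝ => t ^ (1 - (j:ℝ) / k)) (𝓝[>] (0:ℝ)) (𝓝[>] (0:ℝ)) := by
      rw [tendsto_nhdsWithin_iff]
      constructor
      · have := (Real.continuousAt_rpow_const 0 (1 - (j:ℝ)/k) (Or.inr hexp.le)).tendsto
        rw [Real.zero_rpow hexp.ne'] at this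
        exact this.mono_left nhdsWithin_le_nhds
      · filter_upwards [self_mem_nhdsWithin] with t (ht : 0 < t)
        exact Real.rpow_pos_of_pos ht _
    have := h3.inv_tendsto_nhdsGT_zero
    refine this.congr' ?_
    filter_upwards [self_mem_nhdsWithin] with t (ht : 0 < t)
    simp only [Pi.inv_apply]
    rw [← Real.rpow_neg ht.le]
    ring_nf
  -- the key lower-bound function tends to atTop
  have h4 : Tendsto (fun r : ℝ => c * x ^ j * (r ^ k - 1) ^ ((j:ℝ)/k - 1)) (𝓝[>] (1:ℝ)) atTop :=
    (h2.comp h1).const_mul_atTop hcx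
  have h5 : Tendsto (fun r : ℝ => c * x ^ j * (r ^ k - 1) ^ ((j:ℝ)/k) / (r ^ j - 1))
      (𝓝[>] (1:ℝ)) atTop := by
    refine tendsto_atTop_mono' _ ?_ h4
    filter_upwards [self_mem_nhdsWithin] with r (hr : 1 < r)
    have hrk : 1 < r ^ k := one_lt_pow₀ hr hk.ne'
    have hrj : 1 < r ^ j := one_lt_pow₀ hr hj.ne'
    have hd : 0 < r ^ j - 1 := by linarith
    have hdk : 0 < r ^ k - 1 := by linarith
    have hle : r ^ j - 1 ≤ r ^ k - 1 := by
      have := pow_le_pow_right₀ hr.le hjk.le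
      linarith
    have hnum : 0 < c * x ^ j * (r ^ k - 1) ^ ((j:ℝ)/k) :=
      mul_pos hcx (Real.rpow_pos_of_pos hdk _)
    calc c * x ^ j * (r ^ k - 1) ^ ((j:ℝ)/k - 1)
        = c * x ^ j * (r ^ k - 1) ^ ((j:ℝ)/k) / (r ^ k - 1) := by
          rw [Real.rpow_sub hdk, Real.rpow_one]; ring
      _ ≤ c * x ^ j * (r ^ k - 1) ^ ((j:ℝ)/k) / (r ^ j - 1) :=
          div_le_div_of_nonneg_left hnum.le hd hle
  have h6 := (Real.tendsto_exp_atTop.comp h5)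
  refine h6.congr' ?_
  filter_upwards [self_mem_nhdsWithin] with r (hr : 1 < r)
  exact (tprod_eq_aux j k hj hk c x hr).symm
end

section
/- Let c : ℕ → ℝ be a sequence of coefficients with c_0 = 0 such that the power series ∑_{j≥1} c_j t^j has positive radius of convergence R, and let f(t) = exp(∑_{j=1}^∞ c_j t^j) for |t| < R. Let x be a real number and k a positive integer. Then, as r tends to 1 from the right, the infinite product over n = 1, 2, 3, … of [ f((r^k − 1)^{1/k} · x / r^n) divided by ∏_{i=1}^{k−1} exp(c_i · ((r^k − 1)^{1/k} · x / r^n)^i) ] tends to exp(c_k · x^k). -/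
/-!
Write `s = (r ^ k - 1) ^ (1 / k)`, `a = s x` and `tₙ = a / r ^ (n + 1)`. Since `c 0 = 0`,
the `n`-th factor is `exp (c k tₙ ^ k + T tₙ)`, where `T t = ∑_{j > k} c j t ^ j = O(t ^ (k + 1))`.
Summing the geometric series, the `c k`-terms contribute `c k a ^ k / (r ^ k - 1) = c k x ^ k`
exactly, because `s ^ k = r ^ k - 1`; the remainders contribute at most a constant times
`|a| ^ (k + 1) / (r ^ (k + 1) - 1) ≤ s |x| ^ (k + 1)`, which tends to `0` with `s`.
-/

open Filter Topology

noncomputable def powerSeriesTail (c : ℕ → ℝ) (m : ℕ) (t : ℝ) : ℝ :=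
  ∑' i, c (i + m) * t ^ (i + m)

theorem abs_powerSeriesTail_le {c : ℕ → ℝ} {ρ M : ℝ} (hρ : 0 < ρ)
    (hM : ∀ j, |c j| * ρ ^ j ≤ M) (m : ℕ) {t : ℝ} (ht : |t| ≤ ρ / 2) :
    |powerSeriesTail c m t| ≤ 2 * M / ρ ^ m * |t| ^ m := by
  have hM0 : 0 ≤ M := (mul_nonneg (abs_nonneg _) (pow_nonneg hρ.le _)).trans (hM 0)
  have hq : |t| / ρ ≤ 1 / 2 := by rw [div_le_iff₀ hρ]; linarith
  have hterm : ∀ i, ‖c (i + m) * t ^ (i + m)‖ ≤ M * (|t| / ρ) ^ m * (1 / 2) ^ i := fun i =>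
    calc ‖c (i + m) * t ^ (i + m)‖ = |c (i + m)| * ρ ^ (i + m) * (|t| / ρ) ^ (i + m) := by
          rw [Real.norm_eq_abs, abs_mul, abs_pow, div_pow, mul_assoc,
            mul_div_cancel₀ _ (by positivity)]
      _ ≤ M * (|t| / ρ) ^ (i + m) := by gcongr; exact hM _
      _ = M * (|t| / ρ) ^ m * (|t| / ρ) ^ i := by ring
      _ ≤ M * (|t| / ρ) ^ m * (1 / 2) ^ i := by gcongr
  calc |powerSeriesTail c m t| ≤ M * (|t| / ρ) ^ m * 2 :=
        tsum_of_norm_bounded (hasSum_geometric_two.mul_left _) hterm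
    _ = 2 * M / ρ ^ m * |t| ^ m := by rw [div_pow]; ring

theorem exp_tsum_div_prod_exp_Ioo {c : ℕ → ℝ} (hc0 : c 0 = 0) {t : ℝ}
    (h : Summable fun j => c j * t ^ j) (k : ℕ) :
    Real.exp (∑' j, c j * t ^ j) / ∏ i ∈ Finset.Ioo 0 k, Real.exp (c i * t ^ i) =
      Real.exp (c k * t ^ k + powerSeriesTail c (k + 1) t) := by
  have hIoo : ∑ i ∈ Finset.Ioo 0 k, c i * t ^ i = ∑ i ∈ Finset.range k, c i * t ^ i := by
    rw [show Finset.Ioo 0 k = (Finset.range k).erase 0 by ext; simp; omega]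
    exact Finset.sum_erase _ (by simp [hc0])
  rw [← Real.exp_sum, ← Real.exp_sub, ← h.sum_add_tsum_nat_add (k + 1), Finset.sum_range_succ,
    hIoo, powerSeriesTail]
  congr 1
  ring

section Geometric

variable {r : ℝ}

theorem hasSum_div_pow_succ_pow (hr : 1 < r) {m : ℕ} (hm : m ≠ 0) (a : ℝ) :
    HasSum (fun n : ℕ => (a / r ^ (n + 1)) ^ m) (a ^ m / (r ^ m - 1)) := by
  have hrm : 1 < r ^ m := one_lt_pow₀ hr hm
  have hr0 : r ≠ 0 := by positivity
  have h := (hasSum_geometric_of_lt_one (by positivity) (inv_lt_one_of_one_lt₀ hrm)).mul_left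
    (a ^ m * (r ^ m)⁻¹)
  have hterm : (fun n : ℕ => (a / r ^ (n + 1)) ^ m) =
      fun n : ℕ => a ^ m * (r ^ m)⁻¹ * ((r ^ m)⁻¹) ^ n := by
    ext n
    rw [div_pow, ← pow_mul, mul_comm, pow_mul, pow_succ, div_eq_mul_inv, mul_inv, inv_pow]
    ring
  have hsum : a ^ m * (r ^ m)⁻¹ * (1 - (r ^ m)⁻¹)⁻¹ = a ^ m / (r ^ m - 1) := by
    have : r ^ m - 1 ≠ 0 := by linarith
    field_simp
  rwa [hterm, ← hsum]

theorem abs_div_pow_le (hr : 1 < r) (a : ℝ) (n : ℕ) : |a / r ^ n| ≤ |a| := by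
  rw [abs_div, abs_of_pos (pow_pos (zero_lt_one.trans hr) _)]
  exact div_le_self (abs_nonneg a) (one_le_pow₀ hr.le)

theorem norm_comp_div_pow_succ_le (hr : 1 < r) {T : ℝ → ℝ} {C a : ℝ} {m : ℕ}
    (hT : ∀ t, |t| ≤ |a| → |T t| ≤ C * |t| ^ m) (n : ℕ) :
    ‖T (a / r ^ (n + 1))‖ ≤ C * (|a| / r ^ (n + 1)) ^ m := by
  have habs : |a / r ^ (n + 1)| = |a| / r ^ (n + 1) := by
    rw [abs_div, abs_of_pos (pow_pos (zero_lt_one.trans hr) _)]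
  rw [Real.norm_eq_abs, ← habs]
  exact hT _ (abs_div_pow_le hr a _)

theorem summable_comp_div_pow_succ (hr : 1 < r) {T : ℝ → ℝ} {C a : ℝ} {m : ℕ} (hm : m ≠ 0)
    (hT : ∀ t, |t| ≤ |a| → |T t| ≤ C * |t| ^ m) :
    Summable fun n : ℕ => T (a / r ^ (n + 1)) :=
  ((hasSum_div_pow_succ_pow hr hm |a|).mul_left C).summable.of_norm_bounded
    (norm_comp_div_pow_succ_le hr hT)

theorem tprod_exp_mul_pow_add_eq (hr : 1 < r) {s : ℝ} {k : ℕ} (hk : k ≠ 0)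
    (hsk : s ^ k = r ^ k - 1) {T : ℝ → ℝ} (d x : ℝ)
    (hT : Summable fun n : ℕ => T (s * x / r ^ (n + 1))) :
    ∏' n : ℕ, Real.exp (d * (s * x / r ^ (n + 1)) ^ k + T (s * x / r ^ (n + 1))) =
      Real.exp (d * x ^ k + ∑' n : ℕ, T (s * x / r ^ (n + 1))) := by
  have hxk : (s * x) ^ k / (r ^ k - 1) = x ^ k := by
    have hne : r ^ k - 1 ≠ 0 := (sub_pos.2 (one_lt_pow₀ hr hk)).ne'
    rw [mul_pow, hsk]
    field_simp
  rw [← hxk]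
  exact (((hasSum_div_pow_succ_pow hr hk _).mul_left d).add hT.hasSum).rexp.tprod_eq

theorem abs_tsum_comp_div_pow_succ_le (hr : 1 < r) {s : ℝ} {k : ℕ} (hs : 0 < s)
    (hsk : s ^ k = r ^ k - 1) {T : ℝ → ℝ} {C : ℝ} (hC : 0 ≤ C) (x : ℝ)
    (hT : ∀ t, |t| ≤ |s * x| → |T t| ≤ C * |t| ^ (k + 1)) :
    |∑' n : ℕ, T (s * x / r ^ (n + 1))| ≤ C * (s * |x| ^ (k + 1)) := by
  calc |∑' n : ℕ, T (s * x / r ^ (n + 1))|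
      ≤ C * (|s * x| ^ (k + 1) / (r ^ (k + 1) - 1)) :=
        tsum_of_norm_bounded ((hasSum_div_pow_succ_pow hr k.succ_ne_zero _).mul_left C)
          (norm_comp_div_pow_succ_le hr hT)
    _ ≤ C * (|s * x| ^ (k + 1) / s ^ k) := by
        gcongr
        rw [hsk]
        linarith [pow_le_pow_right₀ hr.le (Nat.le_add_right k 1)]
    _ = C * (s * |x| ^ (k + 1)) := by
        rw [abs_mul, abs_of_pos hs]
        field_simp
        ring

end Geometric

section Scale

variable {k : ℕ}

theorem rpow_one_div_pow_sub_one_pow (hk : k ≠ 0) {r : ℝ} (hr : 1 ≤ r) :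
    ((r ^ k - 1) ^ ((1 : ℝ) / k)) ^ k = r ^ k - 1 := by
  rw [one_div]
  exact Real.rpow_inv_natCast_pow (sub_nonneg.2 (one_le_pow₀ hr)) hk

theorem tendsto_rpow_one_div_pow_sub_one (hk : k ≠ 0) :
    Tendsto (fun r : ℝ => (r ^ k - 1) ^ ((1 : ℝ) / k)) (𝓝[>] 1) (𝓝 0) := by
  have hcont : Continuous fun r : ℝ => (r ^ k - 1) ^ ((1 : ℝ) / k) :=
    ((continuous_pow k).sub continuous_const).rpow_const fun _ => Or.inr (by positivity)
  simpa [hk] using (hcont.tendsto 1).mono_left nhdsWithin_le_nhds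

theorem eventually_abs_rpow_one_div_pow_sub_one_mul_le (hk : k ≠ 0) (x : ℝ) {δ : ℝ}
    (hδ : 0 < δ) : ∀ᶠ r in 𝓝[>] 1, 1 < r ∧ |(r ^ k - 1) ^ ((1 : ℝ) / k) * x| ≤ δ := by
  have hsx : Tendsto (fun r : ℝ => |(r ^ k - 1) ^ ((1 : ℝ) / k) * x|) (𝓝[>] 1) (𝓝 0) := by
    simpa using ((tendsto_rpow_one_div_pow_sub_one hk).mul_const x).abs
  exact eventually_mem_nhdsWithin.and (hsx.eventually_le_const hδ)

theorem tendsto_tprod_exp_mul_pow_add (hk : k ≠ 0) {T : ℝ → ℝ} {C δ : ℝ} (hδ : 0 < δ)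
    (hT : ∀ t, |t| ≤ δ → |T t| ≤ C * |t| ^ (k + 1)) (d x : ℝ) :
    Tendsto (fun r : ℝ => ∏' n : ℕ,
        Real.exp (d * ((r ^ k - 1) ^ ((1 : ℝ) / k) * x / r ^ (n + 1)) ^ k +
          T ((r ^ k - 1) ^ ((1 : ℝ) / k) * x / r ^ (n + 1))))
      (𝓝[>] 1) (𝓝 (Real.exp (d * x ^ k))) := by
  have hC : 0 ≤ C := nonneg_of_mul_nonneg_left ((abs_nonneg _).trans (hT δ (abs_of_pos hδ).le))
    (by positivity)
  set s : ℝ → ℝ := fun r => (r ^ k - 1) ^ ((1 : ℝ) / k)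
  set E : ℝ → ℝ := fun r => ∑' n : ℕ, T (s r * x / r ^ (n + 1))
  have key : ∀ᶠ r in 𝓝[>] 1,
      ∏' n : ℕ, Real.exp (d * (s r * x / r ^ (n + 1)) ^ k + T (s r * x / r ^ (n + 1))) =
        Real.exp (d * x ^ k + E r) ∧ |E r| ≤ C * (s r * |x| ^ (k + 1)) := by
    filter_upwards [eventually_abs_rpow_one_div_pow_sub_one_mul_le hk x hδ] with r ⟨hr, hsx⟩
    have hs : 0 < s r := Real.rpow_pos_of_pos (sub_pos.2 (one_lt_pow₀ hr hk)) _
    have hsk : s r ^ k = r ^ k - 1 := rpow_one_div_pow_sub_one_pow hk hr.le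
    have hTr : ∀ t, |t| ≤ |s r * x| → |T t| ≤ C * |t| ^ (k + 1) :=
      fun t ht => hT t (ht.trans hsx)
    exact ⟨tprod_exp_mul_pow_add_eq hr hk hsk d x
        (summable_comp_div_pow_succ hr k.succ_ne_zero hTr),
      abs_tsum_comp_div_pow_succ_le hr hs hsk hC x hTr⟩
  have hE : Tendsto E (𝓝[>] 1) (𝓝 0) :=
    squeeze_zero_norm' (key.mono fun _ h => h.2) <| by
      simpa only [zero_mul, mul_zero] using
        ((tendsto_rpow_one_div_pow_sub_one hk).mul_const (|x| ^ (k + 1))).const_mul C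
  refine Tendsto.congr' (key.mono fun _ h => h.1.symm) ?_
  simpa using (hE.const_add (d * x ^ k)).rexp

end Scale

theorem exists_abs_mul_pow_le_of_summable {c : ℕ → ℝ} {ρ : ℝ} (hρ : 0 < ρ)
    (h : Summable fun j => c j * ρ ^ j) : ∃ M, ∀ j, |c j| * ρ ^ j ≤ M := by
  obtain ⟨M, hM⟩ := h.tendsto_atTop_zero.norm.bddAbove_range
  exact ⟨M, fun j => by simpa [abs_mul, abs_pow, abs_of_pos hρ] using hM ⟨j, rfl⟩⟩

/-- Let `c : ℕ → ℝ` with `c 0 = 0` be such that `∑_{j≥1} c_j t^j` converges for `|t| < R`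
(with `R > 0`), and let `f t = exp (∑' j, c j * t ^ j)`. Then for any real `x` and any
positive integer `k`, as `r → 1⁺`, the infinite product over `n = 1, 2, 3, …` of
`f ((r^k − 1)^(1/k) * x / r^n) / ∏_{i=1}^{k−1} exp (c i * ((r^k − 1)^(1/k) * x / r^n)^i)`
tends to `exp (c k * x ^ k)`. -/
theorem tendsto_component_extraction
    (c : ℕ → ℝ) (hc0 : c 0 = 0) (R : ℝ) (hR : 0 < R)
    (hsum : ∀ t : ℝ, |t| < R → Summable fun j : ℕ => c j * t ^ j)
    (f : ℝ → ℝ) (hf : ∀ t : ℝ, |t| < R → f t = Real.exp (∑' j : ℕ, c j * t ^ j))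
    (x : ℝ) (k : ℕ) (hk : 0 < k) :
    Tendsto
      (fun r : ℝ =>
        ∏' n : ℕ,
          (f ((r ^ k - 1) ^ ((1 : ℝ) / k) * x / r ^ (n + 1)) /
            ∏ i ∈ Finset.Ioo 0 k,
              Real.exp (c i * ((r ^ k - 1) ^ ((1 : ℝ) / k) * x / r ^ (n + 1)) ^ i)))
      (𝓝[>] (1 : ℝ)) (𝓝 (Real.exp (c k * x ^ k))) := by
  have hR2 : |R / 2| < R := by rw [abs_of_pos (half_pos hR)]; linarith
  obtain ⟨M, hM⟩ := exists_abs_mul_pow_le_of_summable (half_pos hR) (hsum _ hR2)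
  have hT : ∀ t, |t| ≤ R / 4 → |powerSeriesTail c (k + 1) t| ≤
      2 * M / (R / 2) ^ (k + 1) * |t| ^ (k + 1) :=
    fun t ht => abs_powerSeriesTail_le (half_pos hR) hM _ (by linarith)
  refine (tendsto_tprod_exp_mul_pow_add hk.ne' (by positivity) hT (c k) x).congr' ?_
  filter_upwards [eventually_abs_rpow_one_div_pow_sub_one_mul_le hk.ne' x
    (by positivity : 0 < R / 4)] with r ⟨hr, hsx⟩
  refine tprod_congr fun n => ?_
  have htR : |(r ^ k - 1) ^ ((1 : ℝ) / k) * x / r ^ (n + 1)| < R := by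
    linarith [abs_div_pow_le hr ((r ^ k - 1) ^ ((1 : ℝ) / k) * x) (n + 1)]
  rw [hf _ htR, exp_tsum_div_prod_exp_Ioo hc0 (hsum _ htR)]
end

section
/- Let c : ℕ → ℝ be a sequence of coefficients with c_0 = 0 such that the power series ∑_{j≥1} c_j t^j has positive radius of convergence R, and let f(t) = exp(∑_{j=1}^∞ c_j t^j) for |t| < R. Let x be a real number and k a positive integer. For each nonempty finite set S of positive integers and each real r > 1, define P_f(S, r, x) = ∏_{n=|S|}^∞ [ f( (∏_{j∈S} (r^j − 1)^{1/j}) · x / r^n ) ]^{binom(n−1, |S|−1)}. Then, as r tends to 1 from the right, the quotient [ ∏_{S : max S = k, |S| odd} P_f(S, r, x) ] / [ ∏_{S : max S = k, |S| even} P_f(S, r, x) ] tends to exp(c_k · x^k), where both outer products range over the (finitely many) subsets S of {1, …, k} containing k of the indicated parity of cardinality. -/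
/-!
Write `log f (t) = ∑ c_j t^j`. Expanding the logarithm of each factor and summing the
negative-binomial series `∑_m binom(m+s-1, s-1) q^(m+s) = (q / (1 - q))^s` with `q = r^(-j)`
gives `log P_f(S, r, x) = ∑_j c_j x^j ∏_{i ∈ S} w_{ij}(r)` with
`w_{ij}(r) = (r^i - 1)^(j/i) / (r^j - 1)`. Inclusion–exclusion over the sets `S ∋ k` turns the
logarithm of the quotient into `∑_j c_j x^j w_{kj}(r) ∏_{i<k} (1 - w_{ij}(r))`.
Since `w_{jj} = 1`, the terms with `j < k` vanish; since `w_{ij}(r) ≤ (r^i - 1)^(j/i - 1) → 0`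
for `i < j`, the term `j = k` tends to `c_k x^k` and the terms `j > k` tend to `0`, and the same
bound with `i = k` gives a geometric majorant for dominated convergence.
-/

open Filter Topology

/-- For a finite set `S` of positive integers and `r, x : ℝ`, `gmpP f S r x` is
`∏_{n=|S|}^∞ f ((∏_{j ∈ S} (r^j − 1)^(1/j)) * x / r^n) ^ (binom (n−1) (|S|−1))`,
where the index over `n ≥ |S|` is parametrized by `n = m + |S|`, `m : ℕ`. -/
noncomputable def gmpP (f : ℝ → ℝ) (S : Finset ℕ) (r x : ℝ) : ℝ :=
  ∏' m : ℕ,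
    (f ((∏ j ∈ S, (r ^ j - 1) ^ ((1 : ℝ) / j)) * x / r ^ (m + S.card)))
      ^ ((m + S.card - 1).choose (S.card - 1))

open Finset

variable {c : ℕ → ℝ} {R r x : ℝ}

theorem summable_abs_mul_pow_of_abs_lt
    (hsum : ∀ t : ℝ, |t| < R → Summable fun j => c j * t ^ j) {t : ℝ} (ht : |t| < R) :
    Summable fun j => |c j| * |t| ^ j := by
  obtain ⟨s, hts, hsR⟩ := exists_between ht
  have hs : 0 < s := (abs_nonneg t).trans_lt hts
  obtain ⟨M, hM⟩ := (hsum s (by rwa [abs_of_pos hs])).tendsto_atTop_zero.norm.bddAbove_range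
  refine .of_nonneg_of_le (fun j => by positivity) (fun j => ?_)
    ((summable_geometric_of_lt_one (by positivity) ((div_lt_one hs).2 hts)).mul_left M)
  calc |c j| * |t| ^ j = ‖c j * s ^ j‖ * (|t| / s) ^ j := by
        rw [Real.norm_eq_abs, abs_mul, abs_pow, abs_of_pos hs, div_pow]
        field_simp
    _ ≤ M * (|t| / s) ^ j := by gcongr; exact hM ⟨j, rfl⟩

theorem hasSum_choose_mul_div_pow (hr : 1 < r) {j : ℕ} (hj : j ≠ 0) (a : ℝ) (d : ℕ) :
    HasSum (fun m : ℕ => ((m + d).choose d : ℝ) * (a / r ^ (m + (d + 1))) ^ j)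
      (a ^ j / (r ^ j - 1) ^ (d + 1)) := by
  have hrj : 1 < r ^ j := one_lt_pow₀ hr hj
  have hq : ‖(r ^ j)⁻¹‖ < 1 := by
    rw [norm_inv, Real.norm_of_nonneg (by positivity)]
    exact inv_lt_one_of_one_lt₀ hrj
  have hterm (m : ℕ) : ((m + d).choose d : ℝ) * (a / r ^ (m + (d + 1))) ^ j =
      a ^ j * (r ^ j)⁻¹ ^ (d + 1) * ((m + d).choose d * (r ^ j)⁻¹ ^ m) := by
    rw [div_pow, ← pow_mul, mul_comm (m + (d + 1)), pow_mul, pow_add]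
    ring
  have hval : a ^ j / (r ^ j - 1) ^ (d + 1) =
      a ^ j * (r ^ j)⁻¹ ^ (d + 1) * (1 / (1 - (r ^ j)⁻¹) ^ (d + 1)) := by
    have : r ^ j - 1 ≠ 0 := by linarith
    rw [mul_assoc, ← div_eq_mul_one_div, ← div_pow,
      show (r ^ j)⁻¹ / (1 - (r ^ j)⁻¹) = (r ^ j - 1)⁻¹ by field_simp, inv_pow,
      div_eq_mul_inv]
  simpa only [hterm, hval] using
    (hasSum_choose_mul_geometric_of_norm_lt_one d hq).mul_left (a ^ j * (r ^ j)⁻¹ ^ (d + 1))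

theorem summable_uncurry_coeff_mul_choose_mul_pow {A : ℝ} (hc0 : c 0 = 0)
    (hsum : ∀ t : ℝ, |t| < R → Summable fun j => c j * t ^ j) (hr : 1 < r) (hA : |A| < R)
    (d : ℕ) :
    Summable (Function.uncurry fun m j : ℕ =>
      c j * (((m + d).choose d : ℝ) * (A / r ^ (m + (d + 1))) ^ j)) := by
  have hr0 : 0 < r := by linarith
  have hr' : ‖r⁻¹‖ < 1 := by
    rw [norm_inv, Real.norm_of_nonneg hr0.le]
    exact inv_lt_one_of_one_lt₀ hr
  refine .of_norm_bounded ((summable_choose_mul_geometric_of_norm_lt_one d hr').mul_of_nonneg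
    (summable_abs_mul_pow_of_abs_lt hsum hA) (fun m => by positivity) (fun j => by positivity))
    fun ⟨m, j⟩ => ?_
  obtain rfl | hj := eq_or_ne j 0
  · simp [hc0]
  have hpow : |A / r ^ (m + (d + 1))| ^ j ≤ |A| ^ j * r⁻¹ ^ m := by
    rw [abs_div, abs_of_pos (pow_pos hr0 _), div_pow, ← pow_mul, inv_pow, ← div_eq_mul_inv]
    gcongr
    · exact hr.le
    · nlinarith [Nat.one_le_iff_ne_zero.2 hj]
  simp only [Function.uncurry_apply_pair, Real.norm_eq_abs, abs_mul, abs_pow, Nat.abs_cast]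
  calc |c j| * (((m + d).choose d : ℝ) * |A / r ^ (m + (d + 1))| ^ j)
      ≤ |c j| * (((m + d).choose d : ℝ) * (|A| ^ j * r⁻¹ ^ m)) := by gcongr
    _ = ((m + d).choose d : ℝ) * r⁻¹ ^ m * (|c j| * |A| ^ j) := by ring

theorem hasSum_coeff_mul_choose_mul_pow (hc0 : c 0 = 0) (hr : 1 < r)
    (A : ℝ) (d j : ℕ) :
    HasSum (fun m : ℕ => c j * (((m + d).choose d : ℝ) * (A / r ^ (m + (d + 1))) ^ j))
      (c j * A ^ j / (r ^ j - 1) ^ (d + 1)) := by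
  obtain rfl | hj := eq_or_ne j 0
  · simp [hc0, hasSum_zero]
  rw [mul_div_assoc]
  exact (hasSum_choose_mul_div_pow hr hj A d).mul_left (c j)

theorem summable_coeff_mul_pow_div_pow_sub_one {A : ℝ} (hc0 : c 0 = 0)
    (hsum : ∀ t : ℝ, |t| < R → Summable fun j => c j * t ^ j)
    (hr : 1 < r) (hA : |A| < R) (d : ℕ) :
    Summable fun j => c j * A ^ j / (r ^ j - 1) ^ (d + 1) :=
  (summable_uncurry_coeff_mul_choose_mul_pow hc0 hsum hr hA d).prod_symm.prod.congr fun j =>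
    (hasSum_coeff_mul_choose_mul_pow hc0 hr A d j).tsum_eq

theorem tprod_pow_choose_eq_exp_tsum {f : ℝ → ℝ} {A : ℝ} (hc0 : c 0 = 0)
    (hsum : ∀ t : ℝ, |t| < R → Summable fun j => c j * t ^ j)
    (hf : ∀ t : ℝ, |t| < R → f t = Real.exp (∑' j, c j * t ^ j))
    (hr : 1 < r) (hA : |A| < R) (d : ℕ) :
    ∏' m : ℕ, f (A / r ^ (m + (d + 1))) ^ (m + d).choose d =
      Real.exp (∑' j, c j * A ^ j / (r ^ j - 1) ^ (d + 1)) := by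
  have hF := summable_uncurry_coeff_mul_choose_mul_pow hc0 hsum hr hA d
  have hfactor (m : ℕ) : f (A / r ^ (m + (d + 1))) ^ (m + d).choose d =
      Real.exp (∑' j, c j * (((m + d).choose d : ℝ) * (A / r ^ (m + (d + 1))) ^ j)) := by
    have hlt : |A / r ^ (m + (d + 1))| < R := by
      rw [abs_div, abs_of_pos (pow_pos (zero_lt_one.trans hr) _)]
      exact (div_le_self (abs_nonneg A) (one_le_pow₀ hr.le)).trans_lt hA
    simp_rw [hf _ hlt, ← Real.exp_nat_mul, ← tsum_mul_left, mul_left_comm]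
  calc _ = ∏' m : ℕ, Real.exp
          (∑' j, c j * (((m + d).choose d : ℝ) * (A / r ^ (m + (d + 1))) ^ j)) :=
        tprod_congr hfactor
    _ = Real.exp (∑' (m) (j), c j * (((m + d).choose d : ℝ) * (A / r ^ (m + (d + 1))) ^ j)) :=
        hF.prod.hasSum.rexp.tprod_eq
    _ = _ := by
        rw [← hF.tsum_comm]
        exact congrArg _
          (tsum_congr fun j => (hasSum_coeff_mul_choose_mul_pow hc0 hr A d j).tsum_eq)

theorem sum_filter_odd_card_sub_sum_filter_even_card {α K : Type*} [CommRing K]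
    (F : Finset (Finset α)) (g : Finset α → K) :
    ∑ S ∈ F with Odd #S, g S - ∑ S ∈ F with Even #S, g S =
      ∑ S ∈ F, (-1) ^ (#S + 1) * g S := by
  rw [sum_filter, sum_filter, ← sum_sub_distrib]
  refine sum_congr rfl fun S _ => ?_
  rcases Nat.even_or_odd #S with h | h
  · simp [h, h.add_one.neg_one_pow, Nat.not_odd_iff_even.2 h]
  · simp [h, h.add_one.neg_one_pow, Nat.not_even_iff_odd.2 h]

theorem sum_powerset_insert_filter_mem_neg_one_pow_mul_prod {α K : Type*} [DecidableEq α]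
    [CommRing K] {a : α} {T : Finset α} (ha : a ∉ T) (w : α → K) :
    ∑ S ∈ (insert a T).powerset with a ∈ S, (-1) ^ (#S + 1) * ∏ i ∈ S, w i =
      w a * ∏ i ∈ T, (1 - w i) := by
  have hnot (S) (hS : S ∈ T.powerset) : a ∉ S := fun h => ha (mem_powerset.1 hS h)
  rw [sum_filter, sum_powerset_insert ha, prod_sub, mul_sum,
    sum_eq_zero fun S hS => if_neg (hnot S hS), zero_add]
  refine sum_congr rfl fun S hS => ?_
  rw [if_pos (mem_insert_self a S), card_insert_of_notMem (hnot S hS),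
    prod_insert (hnot S hS)]
  simp only [prod_const_one]
  ring

noncomputable section

def gmpScale (S : Finset ℕ) (r : ℝ) : ℝ := ∏ j ∈ S, (r ^ j - 1) ^ ((1 : ℝ) / j)

def gmpWeight (i j : ℕ) (r : ℝ) : ℝ := (r ^ i - 1) ^ ((j : ℝ) / i) / (r ^ j - 1)

def gmpKernel (k j : ℕ) (r : ℝ) : ℝ :=
  gmpWeight k j r * ∏ i ∈ Icc 1 (k - 1), (1 - gmpWeight i j r)

end

theorem pow_sub_one_nonneg (hr : 1 ≤ r) (i : ℕ) : 0 ≤ r ^ i - 1 :=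
  sub_nonneg.2 (one_le_pow₀ hr)

theorem gmpScale_mul_pow_div (hr : 1 ≤ r) (S : Finset ℕ) (j : ℕ) :
    (gmpScale S r * x) ^ j / (r ^ j - 1) ^ #S = x ^ j * ∏ i ∈ S, gmpWeight i j r := by
  have hpow (i : ℕ) : ((r ^ i - 1) ^ ((1 : ℝ) / i)) ^ j = (r ^ i - 1) ^ ((j : ℝ) / i) := by
    rw [← Real.rpow_natCast, ← Real.rpow_mul (pow_sub_one_nonneg hr i), one_div_mul_eq_div]
  simp only [gmpScale, gmpWeight, mul_pow, ← prod_pow, hpow, prod_div_distrib, prod_const]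
  ring

theorem sum_neg_one_pow_mul_prod_gmpWeight {k : ℕ} (hk : k ≠ 0) (j : ℕ) :
    ∑ S ∈ (Icc 1 k).powerset.filter (fun S => k ∈ S),
        (-1) ^ (#S + 1) * ∏ i ∈ S, gmpWeight i j r =
      gmpKernel k j r := by
  rw [gmpKernel, ← insert_Icc_sub_one_right_eq_Icc (Nat.one_le_iff_ne_zero.2 hk)]
  exact sum_powerset_insert_filter_mem_neg_one_pow_mul_prod (by simp; omega) _

theorem summable_coeff_mul_pow_mul_prod_gmpWeight {S : Finset ℕ} (hc0 : c 0 = 0)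
    (hsum : ∀ t : ℝ, |t| < R → Summable fun j => c j * t ^ j)
    (hS : S.Nonempty) (hr : 1 < r) (hA : |gmpScale S r * x| < R) :
    Summable fun j => c j * x ^ j * ∏ i ∈ S, gmpWeight i j r := by
  obtain ⟨d, hd⟩ := Nat.exists_eq_add_one_of_ne_zero hS.card_pos.ne'
  refine (summable_coeff_mul_pow_div_pow_sub_one hc0 hsum hr hA d).congr fun j => ?_
  rw [mul_div_assoc, ← hd, gmpScale_mul_pow_div hr.le, mul_assoc]

theorem gmpP_eq_exp_tsum {f : ℝ → ℝ} {S : Finset ℕ} (hc0 : c 0 = 0)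
    (hsum : ∀ t : ℝ, |t| < R → Summable fun j => c j * t ^ j)
    (hf : ∀ t : ℝ, |t| < R → f t = Real.exp (∑' j, c j * t ^ j))
    (hS : S.Nonempty) (hr : 1 < r) (hA : |gmpScale S r * x| < R) :
    gmpP f S r x = Real.exp (∑' j, c j * x ^ j * ∏ i ∈ S, gmpWeight i j r) := by
  obtain ⟨d, hd⟩ := Nat.exists_eq_add_one_of_ne_zero hS.card_pos.ne'
  simp only [gmpP, hd, Nat.add_sub_cancel, ← add_assoc]
  refine (tprod_pow_choose_eq_exp_tsum hc0 hsum hf hr hA d).trans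
    (congrArg _ (tsum_congr fun j => ?_))
  rw [mul_div_assoc, ← hd, gmpScale_mul_pow_div hr.le, mul_assoc]

theorem gmpP_ratio_eq_exp_tsum {f : ℝ → ℝ} {k : ℕ} (hc0 : c 0 = 0)
    (hsum : ∀ t : ℝ, |t| < R → Summable fun j => c j * t ^ j)
    (hf : ∀ t : ℝ, |t| < R → f t = Real.exp (∑' j, c j * t ^ j))
    (hk : k ≠ 0) (hr : 1 < r)
    (hA : ∀ S ∈ (Icc 1 k).powerset.filter (fun S => k ∈ S), |gmpScale S r * x| < R) :
    (∏ S ∈ (Icc 1 k).powerset.filter (fun S => k ∈ S ∧ Odd S.card), gmpP f S r x) /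
        ∏ S ∈ (Icc 1 k).powerset.filter (fun S => k ∈ S ∧ Even S.card), gmpP f S r x =
      Real.exp (∑' j, c j * x ^ j * gmpKernel k j r) := by
  have hP (S) (hS : S ∈ (Icc 1 k).powerset.filter (fun S => k ∈ S)) :=
    gmpP_eq_exp_tsum hc0 hsum hf ⟨k, (mem_filter.1 hS).2⟩ hr (hA S hS)
  have hL (S) (hS : S ∈ (Icc 1 k).powerset.filter (fun S => k ∈ S)) :=
    summable_coeff_mul_pow_mul_prod_gmpWeight hc0 hsum ⟨k, (mem_filter.1 hS).2⟩ hr (hA S hS)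
  rw [← filter_filter, ← filter_filter,
    prod_congr rfl fun S hS => hP S (mem_of_mem_filter S hS),
    prod_congr rfl fun S hS => hP S (mem_of_mem_filter S hS),
    ← Real.exp_sum, ← Real.exp_sum, ← Real.exp_sub,
    sum_filter_odd_card_sub_sum_filter_even_card]
  simp_rw [← tsum_mul_left]
  rw [← Summable.tsum_finsetSum fun S hS => (hL S hS).mul_left _]
  refine congrArg _ (tsum_congr fun j => ?_)
  rw [← sum_neg_one_pow_mul_prod_gmpWeight hk, mul_sum]
  exact sum_congr rfl fun S _ => by ring

section Weights

variable {i j k : ℕ}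

theorem continuous_pow_sub_one_rpow (i : ℕ) {p : ℝ} (hp : 0 ≤ p) :
    Continuous fun r : ℝ => (r ^ i - 1) ^ p :=
  ((continuous_pow i).sub continuous_const).rpow_const fun _ => Or.inr hp

theorem tendsto_gmpScale_zero {S : Finset ℕ} (hkS : k ∈ S) (hk : k ≠ 0) :
    Tendsto (gmpScale S) (𝓝 1) (𝓝 0) := by
  have := tendsto_finsetProd S fun i _ =>
    (continuous_pow_sub_one_rpow i (p := (1 : ℝ) / i) (by positivity)).tendsto 1
  rwa [prod_eq_zero hkS (by simp [hk])] at this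

theorem gmpWeight_self (hj : j ≠ 0) (hr : 1 < r) : gmpWeight j j r = 1 := by
  have : r ^ j - 1 ≠ 0 := (sub_pos.2 (one_lt_pow₀ hr hj)).ne'
  rw [gmpWeight, div_self (Nat.cast_ne_zero.2 hj), Real.rpow_one, div_self this]

theorem gmpWeight_nonneg (hr : 1 ≤ r) : 0 ≤ gmpWeight i j r :=
  div_nonneg (Real.rpow_nonneg (pow_sub_one_nonneg hr i) _) (pow_sub_one_nonneg hr j)

theorem gmpWeight_le (hi : i ≠ 0) (hij : i ≤ j) (hr : 1 < r) :
    gmpWeight i j r ≤ (r ^ i - 1) ^ ((j : ℝ) / i - 1) := by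
  have hu : 0 < r ^ i - 1 := sub_pos.2 (one_lt_pow₀ hr hi)
  have hle : r ^ i - 1 ≤ r ^ j - 1 := sub_le_sub_right (pow_le_pow_right₀ hr.le hij) 1
  rw [gmpWeight, div_le_iff₀ (hu.trans_le hle), Real.rpow_sub_one hu.ne', div_mul_eq_mul_div,
    le_div_iff₀ hu]
  gcongr

theorem tendsto_gmpWeight (hi : i ≠ 0) (hij : i ≤ j) :
    Tendsto (gmpWeight i j) (𝓝[>] 1) (𝓝 (if i = j then 1 else 0)) := by
  obtain rfl | hlt := hij.eq_or_lt
  · rw [if_pos rfl]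
    exact tendsto_const_nhds.congr'
      (eventually_nhdsWithin_of_forall fun r hr => (gmpWeight_self hi hr).symm)
  rw [if_neg hlt.ne]
  have hp : 0 < (j : ℝ) / i - 1 := by
    rw [sub_pos, one_lt_div (by positivity)]
    exact_mod_cast hlt
  have hbound :
      Tendsto (fun r : ℝ => (r ^ i - 1) ^ ((j : ℝ) / i - 1)) (𝓝[>] 1) (𝓝 0) := by
    simpa [Real.zero_rpow hp.ne'] using
      ((continuous_pow_sub_one_rpow i hp.le).tendsto 1).mono_left nhdsWithin_le_nhds
  exact squeeze_zero' (eventually_nhdsWithin_of_forall fun r hr => gmpWeight_nonneg hr.out.le)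
    (eventually_nhdsWithin_of_forall fun r hr => gmpWeight_le hi hij hr) hbound

theorem gmpKernel_eq_zero (hj : j ≠ 0) (hjk : j < k) (hr : 1 < r) : gmpKernel k j r = 0 := by
  rw [gmpKernel, prod_eq_zero (i := j) (by simp; omega) (by rw [gmpWeight_self hj hr, sub_self]),
    mul_zero]

theorem tendsto_gmpKernel (hk : k ≠ 0) (hkj : k ≤ j) :
    Tendsto (gmpKernel k j) (𝓝[>] 1) (𝓝 (if k = j then 1 else 0)) := by
  have hprod : Tendsto (fun r => ∏ i ∈ Icc 1 (k - 1), (1 - gmpWeight i j r)) (𝓝[>] 1)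
      (𝓝 (∏ _i ∈ Icc 1 (k - 1), (1 - 0))) := by
    refine tendsto_finsetProd _ fun i hi => ?_
    obtain ⟨hi1, hik⟩ := mem_Icc.1 hi
    have := (tendsto_const_nhds (x := (1 : ℝ))).sub
      (tendsto_gmpWeight (i := i) (j := j) (by omega) (by omega))
    rwa [if_neg (by omega)] at this
  have := (tendsto_gmpWeight hk hkj).mul hprod
  simp only [sub_zero, prod_const_one, mul_one] at this
  exact this

theorem abs_gmpKernel_le_pow_div_pow {ρ : ℝ} (hk : k ≠ 0) (hkj : k ≤ j) (hr : 1 < r)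
    (hρ0 : 0 < ρ) (hρ1 : ρ ≤ 1) (hrρ : r ^ k - 1 ≤ ρ ^ k) :
    |gmpKernel k j r| ≤ ρ ^ j / ρ ^ k := by
  have hmono {i : ℕ} (hik : i ≤ k) : r ^ i - 1 ≤ ρ ^ k :=
    (sub_le_sub_right (pow_le_pow_right₀ hr.le hik) 1).trans hrρ
  have hfactor (i) (hi : i ∈ Icc 1 (k - 1)) : |1 - gmpWeight i j r| ≤ 1 := by
    obtain ⟨hi1, hik⟩ := mem_Icc.1 hi
    have hexp : 0 ≤ (j : ℝ) / i - 1 := by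
      rw [sub_nonneg, one_le_div (by exact_mod_cast hi1)]
      exact_mod_cast (by omega : i ≤ j)
    have h0 := gmpWeight_nonneg (i := i) (j := j) hr.le
    have h1 := (gmpWeight_le (by omega) (by omega) hr).trans <| Real.rpow_le_one
      (pow_sub_one_nonneg hr.le _) ((hmono (by omega)).trans (pow_le_one₀ hρ0.le hρ1)) hexp
    rw [abs_le]
    constructor <;> linarith
  have hρpow : (ρ ^ k) ^ ((j : ℝ) / k - 1) = ρ ^ j / ρ ^ k := by
    rw [← Real.rpow_natCast ρ k, ← Real.rpow_mul hρ0.le,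
      show (k : ℝ) * (j / k - 1) = j - k by field_simp, Real.rpow_sub hρ0,
      Real.rpow_natCast, Real.rpow_natCast]
  rw [gmpKernel, abs_mul, abs_of_nonneg (gmpWeight_nonneg hr.le), abs_prod, ← hρpow]
  calc _ ≤ (r ^ k - 1) ^ ((j : ℝ) / k - 1) * 1 :=
        mul_le_mul (gmpWeight_le hk hkj hr) (prod_le_one (fun _ _ => abs_nonneg _) hfactor)
          (by positivity) (Real.rpow_nonneg (pow_sub_one_nonneg hr.le _) _)
    _ ≤ (ρ ^ k) ^ ((j : ℝ) / k - 1) := by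
        rw [mul_one]
        refine Real.rpow_le_rpow (pow_sub_one_nonneg hr.le _) hrρ ?_
        rw [sub_nonneg, one_le_div (by exact_mod_cast Nat.pos_of_ne_zero hk)]
        exact_mod_cast hkj

end Weights

theorem coeff_mul_pow_mul_gmpKernel_eq_zero {j k : ℕ} (hc0 : c 0 = 0) (hjk : j < k) (hr : 1 < r) :
    c j * x ^ j * gmpKernel k j r = 0 := by
  obtain rfl | hj := eq_or_ne j 0
  · simp [hc0]
  · rw [gmpKernel_eq_zero hj hjk hr, mul_zero]

theorem tendsto_coeff_mul_pow_mul_gmpKernel {k : ℕ} (hc0 : c 0 = 0) (hk : k ≠ 0) (j : ℕ) :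
    Tendsto (fun r => c j * x ^ j * gmpKernel k j r) (𝓝[>] 1)
      (𝓝 (if j = k then c k * x ^ k else 0)) := by
  rcases lt_or_ge j k with hjk | hkj
  · rw [if_neg hjk.ne]
    exact tendsto_const_nhds.congr' (eventually_nhdsWithin_of_forall fun r hr =>
      (coeff_mul_pow_mul_gmpKernel_eq_zero hc0 hjk hr).symm)
  have := (tendsto_gmpKernel hk hkj).const_mul (c j * x ^ j)
  obtain rfl | hne := eq_or_ne j k
  · simpa using this
  · simpa [hne, hne.symm] using this

theorem tendsto_tsum_coeff_mul_pow_mul_gmpKernel {k : ℕ} (hc0 : c 0 = 0) (hR : 0 < R)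
    (hsum : ∀ t : ℝ, |t| < R → Summable fun j => c j * t ^ j) (hk : k ≠ 0) :
    Tendsto (fun r => ∑' j, c j * x ^ j * gmpKernel k j r) (𝓝[>] 1) (𝓝 (c k * x ^ k)) := by
  set ρ := R / (|x| + R)
  have hρ0 : 0 < ρ := by positivity
  have hρ1 : ρ ≤ 1 := div_le_one_of_le₀ (by linarith [abs_nonneg x]) (by positivity)
  have hxρ : |(|x| * ρ)| < R := by
    rw [abs_of_nonneg (by positivity), mul_div_assoc', div_lt_iff₀ (by positivity)]
    nlinarith [abs_nonneg x]
  have hnear : ∀ᶠ r in 𝓝[>] (1 : ℝ), r ^ k - 1 ≤ ρ ^ k := by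
    have : Tendsto (fun r : ℝ => r ^ k - 1) (𝓝 1) (𝓝 0) :=
      (by fun_prop : Continuous fun r : ℝ => r ^ k - 1).tendsto' 1 0 (by simp)
    exact (this.eventually (ge_mem_nhds (by positivity))).filter_mono nhdsWithin_le_nhds
  have hbound : ∀ᶠ r in 𝓝[>] (1 : ℝ),
      ∀ j, ‖c j * x ^ j * gmpKernel k j r‖ ≤ |c j| * |(|x| * ρ)| ^ j / ρ ^ k := by
    filter_upwards [self_mem_nhdsWithin, hnear] with r hr hrρ j
    rcases lt_or_ge j k with hjk | hkj
    · rw [coeff_mul_pow_mul_gmpKernel_eq_zero hc0 hjk hr, norm_zero]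
      positivity
    calc ‖c j * x ^ j * gmpKernel k j r‖ = |c j| * |x| ^ j * |gmpKernel k j r| := by
          rw [Real.norm_eq_abs, abs_mul, abs_mul, abs_pow]
      _ ≤ |c j| * |x| ^ j * (ρ ^ j / ρ ^ k) := by
          gcongr
          exact abs_gmpKernel_le_pow_div_pow hk hkj hr hρ0 hρ1 hrρ
      _ = |c j| * |(|x| * ρ)| ^ j / ρ ^ k := by
          rw [abs_of_nonneg (by positivity : 0 ≤ |x| * ρ), mul_pow]
          ring
  simpa using tendsto_tsum_of_dominated_convergence
    ((summable_abs_mul_pow_of_abs_lt hsum hxρ).div_const _)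
    (tendsto_coeff_mul_pow_mul_gmpKernel hc0 hk) hbound

/-- Let `c : ℕ → ℝ` with `c 0 = 0` be such that `∑_{j≥1} c_j t^j` converges for `|t| < R`
(with `R > 0`), and let `f t = exp (∑' j, c j * t ^ j)` for `|t| < R`. Then for any real `x`
and positive integer `k`, as `r → 1⁺`, the quotient of the product of `P_f (S, r, x)` over
the subsets `S ⊆ {1, …, k}` with `k ∈ S` of odd cardinality by the product over those of
even cardinality tends to `exp (c k * x ^ k)`. -/
theorem tendsto_component_multiproduct_consolidated
    (c : ℕ → ℝ) (hc0 : c 0 = 0) (R : ℝ) (hR : 0 < R)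
    (hsum : ∀ t : ℝ, |t| < R → Summable fun j : ℕ => c j * t ^ j)
    (f : ℝ → ℝ) (hf : ∀ t : ℝ, |t| < R → f t = Real.exp (∑' j : ℕ, c j * t ^ j))
    (x : ℝ) (k : ℕ) (hk : 0 < k) :
    Tendsto
      (fun r : ℝ =>
        (∏ S ∈ (Finset.Icc 1 k).powerset.filter (fun S => k ∈ S ∧ Odd S.card),
            gmpP f S r x) /
          ∏ S ∈ (Finset.Icc 1 k).powerset.filter (fun S => k ∈ S ∧ Even S.card),
            gmpP f S r x)
      (𝓝[>] (1 : ℝ)) (𝓝 (Real.exp (c k * x ^ k))) := by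
  have hk0 : k ≠ 0 := hk.ne'
  have hscale : ∀ᶠ r in 𝓝[>] (1 : ℝ),
      ∀ S ∈ (Icc 1 k).powerset.filter (fun S => k ∈ S), |gmpScale S r * x| < R := by
    refine (eventually_all_finset _).2 fun S hS => ?_
    have := ((tendsto_gmpScale_zero (mem_filter.1 hS).2 hk0).mul_const x).abs
    rw [zero_mul, abs_zero] at this
    exact (this.eventually (gt_mem_nhds hR)).filter_mono nhdsWithin_le_nhds
  refine ((Real.continuous_exp.tendsto _).comp
    (tendsto_tsum_coeff_mul_pow_mul_gmpKernel hc0 hR hsum hk0)).congr' ?_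
  filter_upwards [self_mem_nhdsWithin, hscale] with r hr hrS
  exact (gmpP_ratio_eq_exp_tsum hc0 hsum hf hk0 hr hrS).symm
end

section
/- Let c : ℕ → ℝ be a sequence of coefficients with c_0 = 0 such that the power series ∑_{j≥1} c_j t^j has positive radius of convergence R, and let f(t) = exp(∑_{j=1}^∞ c_j t^j) for |t| < R. Let x be a real number. Then, as r tends to 1 from the right, the infinite product over n = 1, 2, 3, … of f((r − 1) · x / r^n) tends to exp(c_1 · x). -/
open Filter Topology

/-!
Write `g t = ∑' j, c j * t ^ j`. Since `g` is analytic at `0` with `g 0 = c 0 = 0`, its Taylor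
remainder `e t = g t - c 1 * t` is `O(t²)`. For the nodes `tₙ = (r - 1) x / rⁿ⁺¹` the product
equals `exp (∑ₙ g tₙ)`; the linear parts sum to `c 1 * x` by the geometric series, while the
remainders are bounded by `K ∑ₙ tₙ² = K (r - 1) x² / (r + 1)`, which tends to `0` as `r → 1⁺`.
-/

theorem isBigO_tsum_sub_linear {c : ℕ → ℝ} {ρ : ℝ} (hρ : 0 < ρ)
    (hsum : Summable fun j => c j * ρ ^ j) :
    (fun t : ℝ => ∑' j, c j * t ^ j - (c 0 + c 1 * t)) =O[𝓝 0] fun t => t ^ 2 := by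
  set p := FormalMultilinearSeries.ofScalars ℝ c
  have hrad : (ρ.toNNReal : ENNReal) ≤ p.radius := by
    refine p.le_radius_of_tendsto (l := 0) ?_
    simpa [p, FormalMultilinearSeries.ofScalars_norm, abs_mul, Real.coe_toNNReal _ hρ.le,
      abs_of_pos hρ] using hsum.tendsto_atTop_zero.norm
  have hp := (p.hasFPowerSeriesOnBall
    ((ENNReal.coe_pos.2 (Real.toNNReal_pos.2 hρ)).trans_le hrad)).hasFPowerSeriesAt
  simpa [p, FormalMultilinearSeries.sum, FormalMultilinearSeries.partialSum,
    Finset.sum_range_succ, FormalMultilinearSeries.ofScalars_apply_eq, mul_comm]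
    using hp.isBigO_sub_partialSum_pow 2

theorem exists_abs_tsum_sub_linear_le {c : ℕ → ℝ} {ρ : ℝ} (hρ : 0 < ρ)
    (hsum : Summable fun j => c j * ρ ^ j) :
    ∃ K ε, 0 < ε ∧ ∀ t, |t| < ε → |∑' j, c j * t ^ j - (c 0 + c 1 * t)| ≤ K * t ^ 2 := by
  obtain ⟨K, hK⟩ := (isBigO_tsum_sub_linear hρ hsum).bound
  obtain ⟨ε, hε, hball⟩ := Metric.eventually_nhds_iff.1 hK
  refine ⟨K, ε, hε, fun t ht => ?_⟩
  simpa [abs_of_nonneg (sq_nonneg t)] using hball (y := t) (by simpa using ht)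

theorem eventually_one_lt_and_sub_one_mul_lt {ε : ℝ} (hε : 0 < ε) (a : ℝ) :
    ∀ᶠ r in 𝓝[>] (1 : ℝ), 1 < r ∧ (r - 1) * a < ε := by
  have hcont : Tendsto (fun r : ℝ => (r - 1) * a) (𝓝 1) (𝓝 0) :=
    (by fun_prop : Continuous fun r : ℝ => (r - 1) * a).tendsto' 1 0 (by simp)
  exact eventually_mem_nhdsWithin.and (nhdsWithin_le_nhds (hcont.eventually (gt_mem_nhds hε)))

theorem hasSum_div_pow_succ {q : ℝ} (hq : 1 < q) (a : ℝ) :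
    HasSum (fun n : ℕ => a / q ^ (n + 1)) (a / (q - 1)) := by
  have hq0 : q ≠ 0 := by linarith
  have hq1 : q - 1 ≠ 0 := by linarith
  have hsum := (hasSum_geometric_of_lt_one (inv_nonneg.2 (by linarith))
    (inv_lt_one_of_one_lt₀ hq)).mul_left (a / q)
  rw [inv_eq_one_div, one_sub_div hq0, inv_div, div_mul_div_cancel₀ hq0] at hsum
  refine hsum.congr_fun fun n => ?_
  rw [one_div_pow, pow_succ]
  field_simp

section GeometricNodes

variable {r : ℝ} (hr : 1 < r) (x : ℝ)
include hr

theorem hasSum_sub_one_mul_div_pow_succ :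
    HasSum (fun n : ℕ => (r - 1) * x / r ^ (n + 1)) x := by
  simpa [mul_div_cancel_left₀ x (sub_ne_zero.2 hr.ne')] using hasSum_div_pow_succ hr ((r - 1) * x)

theorem hasSum_sq_sub_one_mul_div_pow_succ :
    HasSum (fun n : ℕ => ((r - 1) * x / r ^ (n + 1)) ^ 2) ((r - 1) * x ^ 2 / (r + 1)) := by
  have h := hasSum_div_pow_succ (one_lt_pow₀ hr two_ne_zero) (((r - 1) * x) ^ 2)
  have hval : ((r - 1) * x) ^ 2 / (r ^ 2 - 1) = (r - 1) * x ^ 2 / (r + 1) := by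
    rw [show r ^ 2 - 1 = (r - 1) * (r + 1) by ring, mul_pow, sq (r - 1), mul_assoc,
      mul_div_mul_left _ _ (sub_ne_zero.2 hr.ne')]
  rw [hval] at h
  exact h.congr_fun fun n => by ring

theorem abs_sub_one_mul_div_pow_succ_le (n : ℕ) :
    |(r - 1) * x / r ^ (n + 1)| ≤ (r - 1) * |x| := by
  rw [abs_div, abs_mul, abs_of_pos (sub_pos.2 hr), abs_of_pos (pow_pos (zero_lt_one.trans hr) _)]
  exact div_le_self (mul_nonneg (by linarith) (abs_nonneg x)) (one_le_pow₀ hr.le)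

end GeometricNodes

section QuadraticRemainder

variable {e : ℝ → ℝ} {K ε : ℝ} (he : ∀ t, |t| < ε → |e t| ≤ K * t ^ 2)
include he

theorem abs_comp_sub_one_mul_div_pow_succ_le {r x : ℝ} (hr : 1 < r) (hx : (r - 1) * |x| < ε)
    (n : ℕ) : |e ((r - 1) * x / r ^ (n + 1))| ≤ K * ((r - 1) * x / r ^ (n + 1)) ^ 2 :=
  he _ ((abs_sub_one_mul_div_pow_succ_le hr x n).trans_lt hx)

theorem summable_comp_sub_one_mul_div_pow_succ {r x : ℝ} (hr : 1 < r)
    (hx : (r - 1) * |x| < ε) : Summable fun n : ℕ => e ((r - 1) * x / r ^ (n + 1)) :=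
  ((hasSum_sq_sub_one_mul_div_pow_succ hr x).mul_left K).summable.of_norm_bounded
    (abs_comp_sub_one_mul_div_pow_succ_le he hr hx)

theorem abs_tsum_comp_sub_one_mul_div_pow_succ_le {r x : ℝ} (hr : 1 < r)
    (hx : (r - 1) * |x| < ε) :
    |∑' n : ℕ, e ((r - 1) * x / r ^ (n + 1))| ≤ K * ((r - 1) * x ^ 2 / (r + 1)) :=
  (Real.norm_eq_abs _).symm.trans_le <| tsum_of_norm_bounded
    ((hasSum_sq_sub_one_mul_div_pow_succ hr x).mul_left K)
    (abs_comp_sub_one_mul_div_pow_succ_le he hr hx)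

theorem tendsto_tsum_comp_sub_one_mul_div_pow_succ (hε : 0 < ε) (x : ℝ) :
    Tendsto (fun r : ℝ => ∑' n : ℕ, e ((r - 1) * x / r ^ (n + 1))) (𝓝[>] 1) (𝓝 0) := by
  have hbound : Tendsto (fun r : ℝ => K * ((r - 1) * x ^ 2 / (r + 1))) (𝓝[>] 1) (𝓝 0) := by
    have hcont : ContinuousAt (fun r : ℝ => K * ((r - 1) * x ^ 2 / (r + 1))) 1 := by
      fun_prop (disch := norm_num)
    simpa using hcont.tendsto.mono_left nhdsWithin_le_nhds
  refine squeeze_zero_norm' ?_ hbound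
  filter_upwards [eventually_one_lt_and_sub_one_mul_lt hε |x|] with r ⟨hr, hx⟩
  exact abs_tsum_comp_sub_one_mul_div_pow_succ_le he hr hx

end QuadraticRemainder

/-- Let `c : ℕ → ℝ` with `c 0 = 0` be such that `∑_{j≥1} c_j t^j` converges for `|t| < R`
(with `R > 0`), and let `f t = exp (∑' j, c j * t ^ j)` for `|t| < R`. Then for any real `x`,
as `r → 1⁺`, the infinite product over `n = 1, 2, 3, …` of `f ((r − 1) * x / r ^ n)`
tends to `exp (c 1 * x)`. -/
theorem tendsto_first_component
    (c : ℕ → ℝ) (hc0 : c 0 = 0) (R : ℝ) (hR : 0 < R)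
    (hsum : ∀ t : ℝ, |t| < R → Summable fun j : ℕ => c j * t ^ j)
    (f : ℝ → ℝ) (hf : ∀ t : ℝ, |t| < R → f t = Real.exp (∑' j : ℕ, c j * t ^ j))
    (x : ℝ) :
    Tendsto
      (fun r : ℝ => ∏' n : ℕ, f ((r - 1) * x / r ^ (n + 1)))
      (𝓝[>] (1 : ℝ)) (𝓝 (Real.exp (c 1 * x))) := by
  obtain ⟨K, ε, hε, hrem⟩ := exists_abs_tsum_sub_linear_le (half_pos hR)
    (hsum _ (by rw [abs_of_pos (half_pos hR)]; linarith))
  simp only [hc0, zero_add] at hrem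
  set e : ℝ → ℝ := fun t => ∑' j, c j * t ^ j - c 1 * t
  have hlim := ((tendsto_tsum_comp_sub_one_mul_div_pow_succ hrem hε x).const_add (c 1 * x)).rexp
  rw [add_zero] at hlim
  refine hlim.congr' ?_
  filter_upwards [eventually_one_lt_and_sub_one_mul_lt (lt_min hε hR) |x|] with r ⟨hr, hx⟩
  have hsum_log : HasSum
      (fun n : ℕ => c 1 * ((r - 1) * x / r ^ (n + 1)) + e ((r - 1) * x / r ^ (n + 1)))
      (c 1 * x + ∑' n : ℕ, e ((r - 1) * x / r ^ (n + 1))) :=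
    ((hasSum_sub_one_mul_div_pow_succ hr x).mul_left (c 1)).add
      (summable_comp_sub_one_mul_div_pow_succ hrem hr (hx.trans_le (min_le_left _ _))).hasSum
  have hf_exp : ∀ n : ℕ, f ((r - 1) * x / r ^ (n + 1)) =
      Real.exp (c 1 * ((r - 1) * x / r ^ (n + 1)) + e ((r - 1) * x / r ^ (n + 1))) := fun n => by
    rw [hf _ ((abs_sub_one_mul_div_pow_succ_le hr x n).trans_lt (hx.trans_le (min_le_right _ _)))]
    simp only [e, add_sub_cancel]
  simp_rw [hf_exp]
  exact hsum_log.rexp.tprod_eq.symm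
end

section
/- For every nonzero real number x, the infinite product over n = 1, 2, 3, … of cos(x / 2^n) converges and equals (1/x) · ∫_0^x cos(s) ds, i.e. equals sin(x)/x. -/
/-!
The double-angle formula reads `sinc (2 t) = sinc t * cos t`, so by induction
`sinc x = sinc (x / 2 ^ n) * ∏_{i < n} cos (x / 2 ^ (i + 1))`; since `sinc` is continuous with
`sinc 0 = 1`, the partial products tend to `sinc x`. Unconditional convergence of the product
holds because `|cos t - 1| ≤ t ^ 2 / 2` and the squares `(x / 2 ^ (n + 1)) ^ 2` are summable.
-/

open Filter Finset Topology

namespace Real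

lemma abs_cos_sub_one_le (x : ℝ) : |cos x - 1| ≤ x ^ 2 / 2 := by
  rw [abs_of_nonpos (sub_nonpos.mpr (cos_le_one x))]
  linarith [one_sub_sq_div_two_le_cos (x := x)]

lemma multipliable_cos_of_summable_sq {ι : Type*} {f : ι → ℝ} (hf : Summable fun i ↦ f i ^ 2) :
    Multipliable fun i ↦ cos (f i) := by
  have hsum : Summable fun i ↦ cos (f i) - 1 :=
    .of_norm_bounded (hf.div_const 2) fun i ↦ abs_cos_sub_one_le (f i)
  simpa using Real.multipliable_one_add_of_summable hsum

lemma sinc_two_mul (x : ℝ) : sinc (2 * x) = sinc x * cos x := by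
  rcases eq_or_ne x 0 with rfl | hx
  · simp
  rw [sinc_of_ne_zero hx, sinc_of_ne_zero (by positivity), sin_two_mul]
  field_simp

lemma sinc_eq_sinc_div_two_pow_mul_prod_cos (x : ℝ) (n : ℕ) :
    sinc x = sinc (x / 2 ^ n) * ∏ i ∈ range n, cos (x / 2 ^ (i + 1)) := by
  induction n with
  | zero => simp
  | succ n ih =>
    have halve : x / 2 ^ n = 2 * (x / 2 ^ (n + 1)) := by rw [pow_succ]; field_simp
    rw [ih, halve, sinc_two_mul, prod_range_succ]
    ring

lemma tendsto_prod_range_cos_div_two_pow (x : ℝ) :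
    Tendsto (fun n ↦ ∏ i ∈ range n, cos (x / 2 ^ (i + 1))) atTop (𝓝 (sinc x)) := by
  have hsinc : Tendsto (fun n : ℕ ↦ sinc (x / 2 ^ n)) atTop (𝓝 1) := by
    have hlim : Tendsto (fun n : ℕ ↦ x / 2 ^ n) atTop (𝓝 0) :=
      tendsto_const_nhds.div_atTop (tendsto_pow_atTop_atTop_of_one_lt one_lt_two)
    rw [← sinc_zero]
    exact (continuous_sinc.tendsto 0).comp hlim
  have hquot : Tendsto (fun n : ℕ ↦ sinc x / sinc (x / 2 ^ n)) atTop (𝓝 (sinc x / 1)) :=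
    tendsto_const_nhds.div hsinc one_ne_zero
  rw [div_one] at hquot
  refine hquot.congr' ?_
  filter_upwards [hsinc.eventually_ne one_ne_zero] with n hn
  rw [sinc_eq_sinc_div_two_pow_mul_prod_cos x n, mul_div_cancel_left₀ _ hn]

lemma hasProd_cos_div_two_pow_succ (x : ℝ) :
    HasProd (fun n : ℕ ↦ cos (x / 2 ^ (n + 1))) (sinc x) := by
  have hsq : Summable fun n : ℕ ↦ (x / 2 ^ (n + 1)) ^ 2 := by
    have hgeom : Summable fun n : ℕ ↦ x ^ 2 / 4 * (1 / 4 : ℝ) ^ n :=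
      (summable_geometric_of_lt_one (by norm_num) (by norm_num)).mul_left _
    refine hgeom.congr fun n ↦ ?_
    have hquarter : (1 / 4 : ℝ) ^ n = 1 / (2 ^ n) ^ 2 := by
      rw [one_div_pow, ← pow_mul, mul_comm, pow_mul]
      norm_num
    rw [hquarter]
    field_simp
    ring
  exact ((multipliable_cos_of_summable_sq hsq).hasProd_iff_tendsto_nat).mpr
    (tendsto_prod_range_cos_div_two_pow x)

end Real

/-- Euler's identity: for every nonzero real `x`, the infinite product over `n = 1, 2, 3, …`
of `cos (x / 2^n)` converges and equals `(1/x) · ∫_0^x cos s ds`, i.e. equals `sin x / x`. -/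
theorem hasProd_cos_halvings (x : ℝ) (hx : x ≠ 0) :
    HasProd (fun n : ℕ => Real.cos (x / 2 ^ (n + 1)))
        ((1 / x) * ∫ s in (0 : ℝ)..x, Real.cos s) ∧
      (1 / x) * (∫ s in (0 : ℝ)..x, Real.cos s) = Real.sin x / x := by
  have hval : (1 / x) * (∫ s in (0 : ℝ)..x, Real.cos s) = Real.sin x / x := by
    rw [integral_cos, Real.sin_zero, sub_zero, one_div_mul_eq_div]
  refine ⟨?_, hval⟩
  rw [hval, ← Real.sinc_of_ne_zero hx]
  exact Real.hasProd_cos_div_two_pow_succ x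
end
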